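/- Let n ≥ 1 and let F be a subset of a De Morgan lattice L. Then F is a Kalman upset of L if and only if there exist a Kleene lattice K, a homomorphism of De Morgan lattices h : L → K, and an upset G of K with F = h⁻¹(G). Moreover, F is a Kalman n-filter on L if and only if such K, h, G exist with G additionally an n-filter on K. -/

import Mathlib

/-- A De Morgan lattice: a distributive lattice with an antitone involution. -/
class DeMorgan (L : Type*) extends DistribLattice L where
  dneg : L → L
  dneg_dneg : ∀ x : L, dneg (dneg x) = x
  dneg_sup : ∀ x y : L, dneg (x ⊔ y) = dneg x ⊓ dneg y

prefix:max "∼" => DeMorgan.dneg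

section Defs

variable {α : Type*}

/-- An upward closed subset of a lattice. -/
def IsUpset [Lattice α] (F : Set α) : Prop :=
  ∀ ⦃x y : α⦄, x ∈ F → x ≤ y → y ∈ F

/-- A lattice filter: an upset closed under binary meets. -/
def IsLatFilter [Lattice α] (F : Set α) : Prop :=
  IsUpset F ∧ ∀ x y : α, x ∈ F → y ∈ F → x ⊓ y ∈ F

/-- An `n`-filter: an upset such that for every nonempty finite `Y`, if the meet of
every nonempty subset of `Y` of size at most `n` lies in `F`, then so does the meet of `Y`. -/
def IsNFilter [Lattice α] (n : ℕ) (F : Set α) : Prop :=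
  IsUpset F ∧ ∀ (Y : Finset α) (hY : Y.Nonempty),
    (∀ (X : Finset α) (hX : X.Nonempty), X ⊆ Y → X.card ≤ n → X.inf' hX id ∈ F) →
    Y.inf' hY id ∈ F

/-- A prime upset: `x ⊔ y ∈ F` implies `x ∈ F` or `y ∈ F`. -/
def IsPrimeUpset [Lattice α] (F : Set α) : Prop :=
  ∀ x y : α, x ⊔ y ∈ F → x ∈ F ∨ y ∈ F

/-- A downward closed subset of a lattice. -/
def IsDownset [Lattice α] (I : Set α) : Prop :=
  ∀ ⦃x y : α⦄, x ∈ I → y ≤ x → y ∈ I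

/-- A lattice ideal: a downset closed under binary joins. -/
def IsIdeal [Lattice α] (I : Set α) : Prop :=
  IsDownset I ∧ ∀ x y : α, x ∈ I → y ∈ I → x ⊔ y ∈ I

/-- An `n`-ideal: the order dual notion of an `n`-filter. -/
def IsNIdeal [Lattice α] (n : ℕ) (I : Set α) : Prop :=
  IsDownset I ∧ ∀ (Y : Finset α) (hY : Y.Nonempty),
    (∀ (X : Finset α) (hX : X.Nonempty), X ⊆ Y → X.card ≤ n → X.sup' hX id ∈ I) →
    Y.sup' hY id ∈ I

variable {L : Type*} [DeMorgan L]

/-- Almost complete upset: `x ∈ F` implies `x ⊓ (y ⊔ ∼y) ∈ F`. -/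
def AlmostComplete (F : Set L) : Prop := ∀ x ∈ F, ∀ y : L, x ⊓ (y ⊔ ∼y) ∈ F

/-- Complete upset: almost complete and nonempty. -/
def IsCompleteUpset (F : Set L) : Prop := AlmostComplete F ∧ F.Nonempty

/-- Almost consistent upset: `(x ⊓ ∼x) ⊔ y ∈ F` implies `y ∈ F`. -/
def AlmostConsistent (F : Set L) : Prop := ∀ x y : L, (x ⊓ ∼x) ⊔ y ∈ F → y ∈ F

/-- Consistent upset: almost consistent and not total. -/
def IsConsistentUpset (F : Set L) : Prop := AlmostConsistent F ∧ F ≠ Set.univ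

/-- Classical upset: complete and consistent. -/
def IsClassicalUpset (F : Set L) : Prop := IsCompleteUpset F ∧ IsConsistentUpset F

/-- Kalman upset. -/
def IsKalmanUpset (F : Set L) : Prop :=
  ∀ x y z u : L, ((x ⊓ ∼x) ⊓ z) ⊔ u ∈ F → ((y ⊔ ∼y) ⊓ z) ⊔ u ∈ F

/-- A homomorphism of De Morgan lattices. -/
def IsDMHom {L M : Type*} [DeMorgan L] [DeMorgan M] (h : L → M) : Prop :=
  (∀ x y : L, h (x ⊓ y) = h x ⊓ h y) ∧ (∀ x y : L, h (x ⊔ y) = h x ⊔ h y) ∧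
    ∀ x : L, h (∼x) = ∼(h x)

/-- The filter generated by all elements of the form `x ⊔ ∼x`. -/
def Fcomp (L : Type*) [DeMorgan L] : Set L :=
  {a | ∃ (s : Finset L) (hs : s.Nonempty), s.inf' hs (fun x => x ⊔ ∼x) ≤ a}

/-- The `n`-filter generated by a set. -/
def nFilterGen (n : ℕ) (U : Set L) : Set L :=
  ⋂₀ {F : Set L | IsNFilter n F ∧ U ⊆ F}

/-- `Comp U`. -/
def CompCl (U : Set L) : Set L := {x | ∃ a ∈ U, ∃ f ∈ Fcomp L, a ⊓ f ≤ x}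

/-- `Cons U`. -/
def ConsCl (U : Set L) : Set L := {x | ∃ f ∈ Fcomp L, ∼f ⊔ x ∈ U}

/-- A congruence of De Morgan lattices, as a binary relation. -/
def IsCongruence (θ : L → L → Prop) : Prop :=
  Equivalence θ ∧
  (∀ a b c d : L, θ a b → θ c d → θ (a ⊓ c) (b ⊓ d)) ∧
  (∀ a b c d : L, θ a b → θ c d → θ (a ⊔ c) (b ⊔ d)) ∧
  ∀ a b : L, θ a b → θ (∼a) (∼b)

end Defs

/-- The four-element De Morgan lattice `DM₁` on `Bool × Bool`. -/
instance : DeMorgan (Bool × Bool) :=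
  { (inferInstance : DistribLattice (Bool × Bool)) with
    dneg := fun p => (!p.2, !p.1)
    dneg_dneg := by decide
    dneg_sup := by decide }

/-- Powers of `DM₁`, with componentwise operations. -/
instance {ι : Type*} : DeMorgan (ι → Bool × Bool) :=
  { (inferInstance : DistribLattice (ι → Bool × Bool)) with
    dneg := fun f i => ∼(f i)
    dneg_dneg := fun f => funext fun i => DeMorgan.dneg_dneg (f i)
    dneg_sup := fun f g => funext fun i => DeMorgan.dneg_sup (f i) (g i) }

universe u

/-!
Preimages of upsets and `n`-filters under lattice homomorphisms are again upsets and `n`-filters,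
and the Kleene inequality in the target makes such a preimage Kalman.

Conversely, let `a ≼ b` mean that every Kalman upset containing `a` contains `b`. Kalman upsets are
stable under `x ↦ x ⊓ c`, `x ↦ x ⊔ c` and `F ↦ {x | ∼x ∉ F}`, so `≼` is a preorder compatible
with `⊓` and `⊔` and reversed by `∼`. Dividing out its symmetric part gives a De Morgan lattice,
which is Kleene because `a ⊓ ∼a ≼ b ⊔ ∼b`. Every Kalman upset `F` is saturated for the quotient map
`mk`, so `F = mk⁻¹(mk F)`, and since `mk` is surjective, `mk F` inherits the upset and `n`-filter
properties of `F`.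
-/

open Function

namespace DeMorgan

variable {L : Type*} [DeMorgan L]

theorem dneg_inf (x y : L) : ∼(x ⊓ y) = ∼x ⊔ ∼y := by
  rw [← dneg_dneg (∼x ⊔ ∼y), dneg_sup, dneg_dneg, dneg_dneg]

theorem dneg_anti : Antitone (dneg : L → L) := fun x y hxy => by
  rw [← sup_eq_right.mpr hxy, dneg_sup]
  exact inf_le_left

end DeMorgan

open DeMorgan

section Transfer

variable {α β : Type*} [Lattice α] [Lattice β] {n : ℕ} {G : Set β}

theorem IsUpset.preimage {f : α → β} (hf : Monotone f) (hG : IsUpset G) : IsUpset (f ⁻¹' G) :=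
  fun _ _ hx hxy => hG hx (hf hxy)

theorem IsUpset.of_preimage (f : InfHom α β) (hf : Surjective f) (hG : IsUpset (f ⁻¹' G)) :
    IsUpset G := by
  intro x y hx hxy
  obtain ⟨a, rfl⟩ := hf x
  obtain ⟨b, rfl⟩ := hf y
  have hab : a ⊓ b ∈ f ⁻¹' G := by rwa [Set.mem_preimage, map_inf, inf_eq_left.mpr hxy]
  exact hG hab inf_le_right

theorem InfHom.map_finset_inf'_id [DecidableEq β] (f : InfHom α β) {s : Finset α}
    (hs : s.Nonempty) : f (s.inf' hs id) = (s.image f).inf' (hs.image f) id := by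
  rw [Finset.inf'_image, map_finset_inf']
  rfl

theorem IsNFilter.preimage (f : InfHom α β) (hG : IsNFilter n G) : IsNFilter n (f ⁻¹' G) := by
  classical
  refine ⟨hG.1.preimage (OrderHomClass.mono f), fun Y hY hsmall => ?_⟩
  rw [Set.mem_preimage, f.map_finset_inf'_id hY]
  refine hG.2 _ _ fun X' hX' hX'Y hcard => ?_
  obtain ⟨X, hXY, hinj, rfl⟩ := Finset.exists_subset_injOn_image_eq_of_surjOn (Y : Set α) X'
    (by rw [Set.SurjOn, ← Finset.coe_image]; exact Finset.coe_subset.mpr hX'Y)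
  have hX : X.Nonempty := hX'.of_image
  rw [Finset.card_image_of_injOn hinj] at hcard
  rw [← f.map_finset_inf'_id hX]
  exact hsmall X hX (Finset.coe_subset.mp hXY) hcard

theorem IsNFilter.of_preimage (f : InfHom α β) (hf : Surjective f) (hF : IsNFilter n (f ⁻¹' G)) :
    IsNFilter n G := by
  classical
  refine ⟨hF.1.of_preimage f hf, fun Y' hY' hsmall => ?_⟩
  obtain ⟨Y, -, -, rfl⟩ :=
    Finset.exists_subset_injOn_image_eq_of_surjOn Set.univ Y' hf.surjOn
  have hY : Y.Nonempty := hY'.of_image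
  rw [← f.map_finset_inf'_id hY]
  refine hF.2 Y hY fun X hX hXY hcard => ?_
  rw [Set.mem_preimage, f.map_finset_inf'_id hX]
  exact hsmall _ _ (Finset.image_subset_image hXY) (Finset.card_image_le.trans hcard)

end Transfer

section Hom

variable {L M : Type*} [DeMorgan L] [DeMorgan M] {h : L → M}

def IsDMHom.toInfHom (hh : IsDMHom h) : InfHom L M := ⟨h, hh.1⟩

theorem IsDMHom.monotone (hh : IsDMHom h) : Monotone h := OrderHomClass.mono hh.toInfHom

theorem isKalmanUpset_preimage (hM : ∀ x y : M, x ⊓ ∼x ≤ y ⊔ ∼y) (hh : IsDMHom h) {G : Set M}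
    (hG : IsUpset G) : IsKalmanUpset (h ⁻¹' G) := by
  intro x y z u hx
  simp only [Set.mem_preimage, hh.1, hh.2.1, hh.2.2] at hx ⊢
  exact hG hx (sup_le_sup_right (inf_le_inf_right _ (hM _ _)) _)

end Hom

section Kalman

variable {L : Type*} [DeMorgan L] {F : Set L}

theorem IsKalmanUpset.preimage_inf_right (hF : IsKalmanUpset F) (c : L) :
    IsKalmanUpset ((· ⊓ c) ⁻¹' F) := by
  intro x y z u
  simpa only [Set.mem_preimage, ← inf_assoc, ← inf_sup_right] using hF x y (z ⊓ c) (u ⊓ c)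

theorem IsKalmanUpset.preimage_sup_right (hF : IsKalmanUpset F) (c : L) :
    IsKalmanUpset ((· ⊔ c) ⁻¹' F) := by
  intro x y z u
  simpa only [Set.mem_preimage, ← sup_assoc] using hF x y z (u ⊔ c)

theorem IsUpset.setOf_dneg_notMem (hF : IsUpset F) : IsUpset {x | ∼x ∉ F} :=
  fun _ _ hx hxy hy => hx (hF hy (dneg_anti hxy))

theorem IsKalmanUpset.setOf_dneg_notMem (hF : IsKalmanUpset F) :
    IsKalmanUpset {x | ∼x ∉ F} := by
  intro x y z u hx hy
  apply hx
  -- both negations have the shape `(k ⊓ ∼u) ⊔ (∼z ⊓ ∼u)`, so `hF` applies with the roles swapped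
  have key := hF (∼y) (∼x) (∼u) (∼z ⊓ ∼u)
  simp only [dneg_dneg] at key
  rw [dneg_sup, dneg_inf, dneg_sup, dneg_dneg, inf_sup_right] at hy
  rw [dneg_sup, dneg_inf, dneg_inf, dneg_dneg, inf_sup_right]
  exact key hy

def KalmanLE (a b : L) : Prop :=
  ∀ F : Set L, IsUpset F → IsKalmanUpset F → a ∈ F → b ∈ F

namespace KalmanLE

variable {a b c d : L}

theorem refl (a : L) : KalmanLE a a := fun _ _ _ ha => ha

theorem trans (hab : KalmanLE a b) (hbc : KalmanLE b c) : KalmanLE a c :=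
  fun F hU hK ha => hbc F hU hK (hab F hU hK ha)

theorem of_le (hab : a ≤ b) : KalmanLE a b := fun _ hU _ ha => hU ha hab

theorem inf_right (hab : KalmanLE a b) (c : L) : KalmanLE (a ⊓ c) (b ⊓ c) :=
  fun _ hU hK => hab _ (hU.preimage fun _ _ h => inf_le_inf_right c h) (hK.preimage_inf_right c)

theorem sup_right (hab : KalmanLE a b) (c : L) : KalmanLE (a ⊔ c) (b ⊔ c) :=
  fun _ hU hK => hab _ (hU.preimage fun _ _ h => sup_le_sup_right h c) (hK.preimage_sup_right c)

theorem inf (hab : KalmanLE a b) (hcd : KalmanLE c d) : KalmanLE (a ⊓ c) (b ⊓ d) := by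
  have hcd' := hcd.inf_right b
  rw [inf_comm c, inf_comm d] at hcd'
  exact (hab.inf_right c).trans hcd'

theorem sup (hab : KalmanLE a b) (hcd : KalmanLE c d) : KalmanLE (a ⊔ c) (b ⊔ d) := by
  have hcd' := hcd.sup_right b
  rw [sup_comm c, sup_comm d] at hcd'
  exact (hab.sup_right c).trans hcd'

theorem dneg (hab : KalmanLE a b) : KalmanLE (∼b) (∼a) :=
  fun _ hU hK hb => not_not.mp fun ha => hab _ hU.setOf_dneg_notMem hK.setOf_dneg_notMem ha hb

theorem inf_dneg_sup_dneg (a b : L) : KalmanLE (a ⊓ ∼a) (b ⊔ ∼b) := by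
  intro F hU hK ha
  have hb := hK a b (a ⊓ ∼a) (b ⊔ ∼b) (hU ha (by rw [inf_idem]; exact le_sup_left))
  rwa [sup_eq_right.mpr inf_le_left] at hb

end KalmanLE

end Kalman

def kalmanSetoid (L : Type*) [DeMorgan L] : Setoid L where
  r a b := KalmanLE a b ∧ KalmanLE b a
  iseqv := ⟨fun a => ⟨.refl a, .refl a⟩, fun h => ⟨h.2, h.1⟩,
    fun h₁ h₂ => ⟨h₁.1.trans h₂.1, h₂.2.trans h₁.2⟩⟩

def KleeneQuotient (L : Type*) [DeMorgan L] : Type _ := Quotient (kalmanSetoid L)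

namespace KleeneQuotient

variable {L : Type*} [DeMorgan L]

def mk (a : L) : KleeneQuotient L := Quotient.mk _ a

theorem mk_surjective : Surjective (mk : L → KleeneQuotient L) := Quotient.mk_surjective

instance : Min (KleeneQuotient L) :=
  ⟨Quotient.map₂ (· ⊓ ·) fun _ _ hab _ _ hcd => ⟨hab.1.inf hcd.1, hab.2.inf hcd.2⟩⟩

instance : Max (KleeneQuotient L) :=
  ⟨Quotient.map₂ (· ⊔ ·) fun _ _ hab _ _ hcd => ⟨hab.1.sup hcd.1, hab.2.sup hcd.2⟩⟩

instance : Lattice (KleeneQuotient L) :=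
  Lattice.mk'
    (by rintro ⟨a⟩ ⟨b⟩; exact congrArg mk (sup_comm a b))
    (by rintro ⟨a⟩ ⟨b⟩ ⟨c⟩; exact congrArg mk (sup_assoc a b c))
    (by rintro ⟨a⟩ ⟨b⟩; exact congrArg mk (inf_comm a b))
    (by rintro ⟨a⟩ ⟨b⟩ ⟨c⟩; exact congrArg mk (inf_assoc a b c))
    (by rintro ⟨a⟩ ⟨b⟩; exact congrArg mk (sup_inf_self (a := a) (b := b)))
    (by rintro ⟨a⟩ ⟨b⟩; exact congrArg mk (inf_sup_self (a := a) (b := b)))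

instance : DistribLattice (KleeneQuotient L) :=
  DistribLattice.ofInfSupLe <| by
    rintro ⟨a⟩ ⟨b⟩ ⟨c⟩
    exact le_of_eq (congrArg mk (inf_sup_left a b c))

instance : DeMorgan (KleeneQuotient L) where
  dneg := Quotient.map dneg fun _ _ hab => ⟨hab.2.dneg, hab.1.dneg⟩
  dneg_dneg := by rintro ⟨a⟩; exact congrArg mk (dneg_dneg a)
  dneg_sup := by rintro ⟨a⟩ ⟨b⟩; exact congrArg mk (dneg_sup a b)

theorem isDMHom_mk : IsDMHom (mk : L → KleeneQuotient L) :=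
  ⟨fun _ _ => rfl, fun _ _ => rfl, fun _ => rfl⟩

theorem mk_le_mk {a b : L} (hab : KalmanLE a b) : mk a ≤ mk b := by
  refine sup_eq_right.mp (Quotient.sound ⟨?_, .of_le le_sup_right⟩)
  simpa only [sup_idem] using hab.sup_right b

theorem inf_dneg_le_sup_dneg (p q : KleeneQuotient L) : p ⊓ ∼p ≤ q ⊔ ∼q := by
  induction p using Quotient.inductionOn
  induction q using Quotient.inductionOn
  exact mk_le_mk (.inf_dneg_sup_dneg _ _)

theorem preimage_image_mk {F : Set L} (hU : IsUpset F) (hK : IsKalmanUpset F) :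
    mk ⁻¹' (mk '' F) = F := by
  refine (Set.subset_preimage_image _ _).antisymm' ?_
  rintro b ⟨a, ha, hab⟩
  exact (Quotient.exact hab).1 F hU hK ha

end KleeneQuotient

open KleeneQuotient in
theorem statement9 {L : Type u} [DeMorgan L] [Nonempty L] (n : ℕ)
    (F : Set L) :
    ((IsUpset F ∧ IsKalmanUpset F) ↔
      ∃ (K : Type u) (_ : DeMorgan K) (_ : Nonempty K),
        (∀ x y : K, x ⊓ ∼x ≤ y ⊔ ∼y) ∧
        ∃ (h : L → K) (G : Set K), IsDMHom h ∧ IsUpset G ∧ F = h ⁻¹' G) ∧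
    ((IsKalmanUpset F ∧ IsNFilter n F) ↔
      ∃ (K : Type u) (_ : DeMorgan K) (_ : Nonempty K),
        (∀ x y : K, x ⊓ ∼x ≤ y ⊔ ∼y) ∧
        ∃ (h : L → K) (G : Set K), IsDMHom h ∧ IsNFilter n G ∧ F = h ⁻¹' G) := by
  have hne : Nonempty (KleeneQuotient L) := ‹Nonempty L›.map mk
  refine ⟨⟨fun ⟨hU, hK⟩ => ?_, ?_⟩, ⟨fun ⟨hK, hF⟩ => ?_, ?_⟩⟩
  · have hsat := preimage_image_mk hU hK
    refine ⟨_, inferInstance, hne, inf_dneg_le_sup_dneg, mk, mk '' F, isDMHom_mk, ?_, hsat.symm⟩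
    have hU' : IsUpset (mk ⁻¹' (mk '' F)) := by rwa [hsat]
    exact hU'.of_preimage isDMHom_mk.toInfHom mk_surjective
  · rintro ⟨K, _, _, hKl, h, G, hh, hG, rfl⟩
    exact ⟨hG.preimage hh.monotone, isKalmanUpset_preimage hKl hh hG⟩
  · have hsat := preimage_image_mk hF.1 hK
    refine ⟨_, inferInstance, hne, inf_dneg_le_sup_dneg, mk, mk '' F, isDMHom_mk, ?_, hsat.symm⟩
    have hF' : IsNFilter n (mk ⁻¹' (mk '' F)) := by rwa [hsat]
    exact hF'.of_preimage isDMHom_mk.toInfHom mk_surjective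
  · rintro ⟨K, _, _, hKl, h, G, hh, hG, rfl⟩
    exact ⟨isKalmanUpset_preimage hKl hh hG.1, hG.preimage hh.toInfHom⟩
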